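/- arXiv:2507.15427 — 5 statements merged into one kernel-verified Lean document; each statement's English description precedes it below -/
import Mathlib

section
/- Suppose κ > λ are infinite cardinals with 2^λ = 2^κ. Then for every set A ⊆ κ^κ there is a set C ⊆ κ^κ × 2^κ that is closed (in the product topology generated by all basic open sets N_η for η : α → κ with α < κ, resp. η : α → 2) such that A is the first projection of C, i.e. A = {f ∈ κ^κ : ∃ g ∈ 2^κ, (f,g) ∈ C}. -/
/-! Since `2^λ = 2^κ = κ^κ`, there is an injection `π : κ^κ → 2^λ`. The set
`C = {(η, ξ) : η ∈ A ∧ π η = ξ ↾ λ}` projects onto `A`, and it is closed: if `(η, ξ) ∉ C`, then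
either `ξ ↾ λ` codes no element of `A`, which is witnessed by `N_{ξ ↾ λ}`, or it codes some
`η' ∈ A` with `η' ≠ η`, and a coordinate where they differ separates `(η, ξ)` from `C`. -/

open Cardinal Set

universe u v w

namespace GDST

variable {K : Type u} {A : Type v}

/-- The set `N_η` determined by the partial function with domain `Y` and values given by `η`. -/
def nbhd (Y : Set K) (η : K → A) : Set (K → A) := {ζ | ∀ i ∈ Y, ζ i = η i}

/-- Basic κ-open subsets of `K → K`: sets `N_η` where `η` is a partial function with
domain of size `< #K`, together with the empty set. -/
def IsBasicOpen (S : Set (K → A)) : Prop :=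
  (∃ (Y : Set K) (η : K → A), #Y < #K ∧ S = nbhd Y η) ∨ S = ∅

/-- Open in the topology generated by the basic κ-open sets. -/
def IsOpenStd (U : Set (K → A)) : Prop :=
  ∀ ζ ∈ U, ∃ S : Set (K → A), IsBasicOpen S ∧ ζ ∈ S ∧ S ⊆ U

/-- A union of at most `μ` basic κ-open sets; `(κ,μ)`-open. -/
def IsMuOpen (μ : Cardinal.{u}) (U : Set (K → A)) : Prop :=
  ∃ (ι : Type u) (f : ι → Set (K → A)), #ι ≤ μ ∧ (∀ i, IsBasicOpen (f i)) ∧ U = ⋃ i, f i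

/-- `(κ,μ)`-closed: the complement is `(κ,μ)`-open. -/
def IsMuClosed (μ : Cardinal.{u}) (C : Set (K → A)) : Prop := IsMuOpen μ Cᶜ

/-- The `(κ,μ)`-Borel sets: the smallest class containing the basic κ-open sets and closed
under complements and unions and intersections of length at most `μ`. -/
inductive MuBorel (μ : Cardinal.{u}) : Set (K → A) → Prop
  | basic (S : Set (K → A)) : IsBasicOpen S → MuBorel μ S
  | compl (S : Set (K → A)) : MuBorel μ S → MuBorel μ Sᶜ
  | iUnion (ι : Type u) (f : ι → Set (K → A)) : #ι ≤ μ → (∀ i, MuBorel μ (f i)) →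
      MuBorel μ (⋃ i, f i)
  | iInter (ι : Type u) (f : ι → Set (K → A)) : #ι ≤ μ → (∀ i, MuBorel μ (f i)) →
      MuBorel μ (⋂ i, f i)

/-- κ-open: a union of at most `κ = #K` basic κ-open sets. -/
def IsKOpen (U : Set (K → A)) : Prop := IsMuOpen #K U

/-- κ-closed. -/
def IsKClosed (C : Set (K → A)) : Prop := IsMuClosed #K C

/-- κ-Borel. -/
def KBorel (S : Set (K → A)) : Prop := MuBorel #K S

/- Product space versions, for subsets of `(K → A) × (K → B)`. -/
section Prod

variable {B : Type w}

/-- Basic κ-open subsets of the product: products of basic κ-open sets. -/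
def IsBasicOpen2 (S : Set ((K → A) × (K → B))) : Prop :=
  ∃ (S₁ : Set (K → A)) (S₂ : Set (K → B)), IsBasicOpen S₁ ∧ IsBasicOpen S₂ ∧ S = S₁ ×ˢ S₂

def IsOpenStd2 (U : Set ((K → A) × (K → B))) : Prop :=
  ∀ p ∈ U, ∃ S, IsBasicOpen2 S ∧ p ∈ S ∧ S ⊆ U

def IsMuOpen2 (μ : Cardinal.{u}) (U : Set ((K → A) × (K → B))) : Prop :=
  ∃ (ι : Type u) (f : ι → Set ((K → A) × (K → B))),
    #ι ≤ μ ∧ (∀ i, IsBasicOpen2 (f i)) ∧ U = ⋃ i, f i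

def IsMuClosed2 (μ : Cardinal.{u}) (C : Set ((K → A) × (K → B))) : Prop := IsMuOpen2 μ Cᶜ

inductive MuBorel2 (μ : Cardinal.{u}) : Set ((K → A) × (K → B)) → Prop
  | basic (S : Set ((K → A) × (K → B))) : IsBasicOpen2 S → MuBorel2 μ S
  | compl (S : Set ((K → A) × (K → B))) : MuBorel2 μ S → MuBorel2 μ Sᶜ
  | iUnion (ι : Type u) (f : ι → Set ((K → A) × (K → B))) : #ι ≤ μ → (∀ i, MuBorel2 μ (f i)) →
      MuBorel2 μ (⋃ i, f i)
  | iInter (ι : Type u) (f : ι → Set ((K → A) × (K → B))) : #ι ≤ μ → (∀ i, MuBorel2 μ (f i)) →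
      MuBorel2 μ (⋂ i, f i)

def IsKOpen2 (U : Set ((K → A) × (K → B))) : Prop := IsMuOpen2 #K U

def IsKClosed2 (C : Set ((K → A) × (K → B))) : Prop := IsMuClosed2 #K C

def KBorel2 (S : Set ((K → A) × (K → B))) : Prop := MuBorel2 #K S

/-- κ-Σ¹₁ : projections of κ-Borel subsets of the product. -/
def KSigma11 (S : Set (K → A)) : Prop :=
  ∃ C : Set ((K → A) × (K → A)), KBorel2 C ∧ S = Prod.fst '' C

end Prod

end GDST

namespace GDST

section Coding

variable {K : Type u} {X : Type v} {B : Type w}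

theorem self_mem_nbhd (Y : Set K) (η : K → X) : η ∈ nbhd Y η := fun _ _ => rfl

theorem nbhd_anti {Y Y' : Set K} (h : Y ⊆ Y') (η : K → X) : nbhd Y' η ⊆ nbhd Y η :=
  fun _ hζ i hi => hζ i (h hi)

/-- The set `C` of the paper, with `e` in the role of `π` and `Y` in that of `λ`. -/
def codeGraph (A : Set (K → X)) (Y : Set K) (e : (K → X) → (Y → B)) :
    Set ((K → X) × (K → B)) :=
  {p | p.1 ∈ A ∧ e p.1 = Y.domRestrict p.2}

theorem fst_image_codeGraph [Nonempty B] (A : Set (K → X)) (Y : Set K)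
    (e : (K → X) → (Y → B)) : Prod.fst '' codeGraph A Y e = A := by
  classical
  refine Subset.antisymm (fun _ ⟨_, hp, hf⟩ => hf ▸ hp.1) fun f hf => ?_
  obtain ⟨g, hg⟩ : ∃ g : K → B, Y.domRestrict g = e f :=
    ⟨fun i => if h : i ∈ Y then e f ⟨i, h⟩ else Classical.arbitrary B,
      funext fun i => dif_pos i.2⟩
  exact ⟨(f, g), ⟨hf, hg.symm⟩, rfl⟩

theorem exists_disjoint_nbhd_codeGraph [Nonempty K] {A : Set (K → X)} {Y : Set K}
    {e : (K → X) → (Y → B)} (he : Function.Injective e) {p : (K → X) × (K → B)}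
    (hp : p ∉ codeGraph A Y e) :
    ∃ i : K, Disjoint (nbhd {i} p.1 ×ˢ nbhd Y p.2) (codeGraph A Y e) := by
  have domRestrict_eq {q : (K → X) × (K → B)} (hq : q.2 ∈ nbhd Y p.2) :
      Y.domRestrict q.2 = Y.domRestrict p.2 := funext fun j => hq j j.2
  by_cases hcode : ∃ f ∈ A, e f = Y.domRestrict p.2
  · obtain ⟨f, hfA, hfe⟩ := hcode
    obtain ⟨i, hi⟩ : ∃ i, p.1 i ≠ f i := by
      by_contra! h
      exact hp ⟨funext h ▸ hfA, funext h ▸ hfe⟩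
    refine ⟨i, disjoint_left.2 fun q ⟨hq₁, hq₂⟩ ⟨_, hqe⟩ => hi ?_⟩
    have hqf : q.1 = f := he (by rw [hqe, domRestrict_eq hq₂, hfe])
    rw [← hqf, hq₁ i rfl]
  · push Not at hcode
    exact ⟨Classical.arbitrary K, disjoint_left.2 fun q ⟨_, hq₂⟩ ⟨hqA, hqe⟩ =>
      hcode q.1 hqA (hqe.trans (domRestrict_eq hq₂))⟩

end Coding

section WellOrder

variable {K : Type u} [LinearOrder K] [IsWellOrder K (· < ·)] {κ : Cardinal.{u}}

theorem mk_eq_of_type_eq_ord (hK : Ordinal.type ((· < ·) : K → K → Prop) = κ.ord) : #K = κ := by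
  rw [← Ordinal.card_type ((· < ·) : K → K → Prop), hK, Cardinal.card_ord]

theorem noMaxOrder_of_type_eq_ord (hκ : ℵ₀ ≤ κ)
    (hK : Ordinal.type ((· < ·) : K → K → Prop) = κ.ord) : NoMaxOrder K := by
  rw [← Ordinal.isSuccPrelimit_type_lt_iff, hK]
  exact (Cardinal.isSuccLimit_ord hκ).isSuccPrelimit

theorem exists_mk_Iio_eq_of_lt {lam : Cardinal.{u}} (hlt : lam < κ)
    (hK : Ordinal.type ((· < ·) : K → K → Prop) = κ.ord) : ∃ b : K, #(Iio b) = lam := by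
  have hlam : lam.ord < Ordinal.type ((· < ·) : K → K → Prop) := hK ▸ Cardinal.ord_lt_ord.2 hlt
  have := Ordinal.card_typein (r := ((· < ·) : K → K → Prop)) (Ordinal.enum (· < ·) ⟨lam.ord, hlam⟩)
  rw [Ordinal.typein_enum, Cardinal.card_ord] at this
  exact ⟨_, this.symm⟩

end WellOrder

theorem nonempty_arrow_embedding_arrow_bool {K Y : Type u} (hK : ℵ₀ ≤ #K)
    (h2 : (2 : Cardinal.{u}) ^ #Y = 2 ^ #K) : Nonempty ((K → K) ↪ (Y → Bool)) := by
  rw [← Cardinal.le_def, Cardinal.mk_arrow, Cardinal.mk_arrow, Cardinal.mk_bool,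
    Cardinal.lift_id, Cardinal.lift_uzero, Cardinal.lift_two, Cardinal.power_self_eq hK, h2]

/-- Suppose κ > λ are infinite cardinals with 2^λ = 2^κ. Then for every set
A ⊆ κ^κ there is a set C ⊆ κ^κ × 2^κ, closed in the product topology generated by the basic
open sets N_η for η : α → κ (resp. η : α → 2) with α < κ, whose first projection is A. -/
theorem statement0 (κ lam : Cardinal.{u}) (hlam : ℵ₀ ≤ lam) (hlt : lam < κ)
    (h2 : (2 : Cardinal.{u}) ^ lam = 2 ^ κ)
    (K : Type u) [LinearOrder K] [IsWellOrder K (· < ·)]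
    (hK : Ordinal.type ((· < ·) : K → K → Prop) = κ.ord) :
    ∀ A : Set (K → K), ∃ C : Set ((K → K) × (K → Bool)),
      (∀ p ∉ C, ∃ (a b : K) (η : K → K) (ν : K → Bool),
          p ∈ (nbhd (Set.Iio a) η) ×ˢ (nbhd (Set.Iio b) ν) ∧
          Disjoint ((nbhd (Set.Iio a) η) ×ˢ (nbhd (Set.Iio b) ν)) C) ∧
      A = Prod.fst '' C := by
  intro A
  have hκ : ℵ₀ ≤ κ := hlam.trans hlt.le
  have hcard : #K = κ := mk_eq_of_type_eq_ord hK
  have : NoMaxOrder K := noMaxOrder_of_type_eq_ord hκ hK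
  obtain ⟨b, hb⟩ := exists_mk_Iio_eq_of_lt hlt hK
  have : Nonempty K := ⟨b⟩
  obtain ⟨e⟩ := nonempty_arrow_embedding_arrow_bool (Y := Iio b) (hcard ▸ hκ)
    (by rw [hb, hcard, h2])
  refine ⟨codeGraph A (Iio b) e, fun p hp => ?_, (fst_image_codeGraph A _ e).symm⟩
  obtain ⟨i, hi⟩ := exists_disjoint_nbhd_codeGraph e.injective hp
  obtain ⟨a, ha⟩ := exists_gt i
  refine ⟨a, b, p.1, p.2, ⟨self_mem_nbhd _ _, self_mem_nbhd _ _⟩, hi.mono_left ?_⟩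
  exact prod_mono (nbhd_anti (singleton_subset_iff.2 (mem_Iio.2 ha)) _) subset_rfl

end GDST
end

section
/- Let κ > λ be infinite cardinals with 2^λ > κ. Then the set {f ∈ κ^κ : f(λ) = f(λ+1)} is clopen in the topology generated by the sets N_η (η : α → κ, α < κ), but it is not a union of at most κ many sets of the form N_η with η : α → κ, α < κ. -/
open Cardinal Set

universe u v w

namespace GDST

/-- A union of basic open sets whose domains are initial segments , ,
i.e. open in the topology generated by the sets , , . -/
def IsOpenInit {K : Type u} [LinearOrder K] (U : Set (K → K)) : Prop :=
  ∀ ζ ∈ U, ∃ (a : K) (η : K → K), ζ ∈ nbhd (Set.Iio a) η ∧ nbhd (Set.Iio a) η ⊆ U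

/-!
Membership in `{f | f λ = f (λ+1)}` depends only on the coordinates below `λ+2 < κ`, so the set
and its complement are open. A basic set `N_η` inside it cannot leave the value at `λ+1` free
(changing it there would break the equation), so the domain of `η` contains `λ+1` and hence all
of `λ`. For each `s ⊆ λ`, the function equal to `p` on `s` and to `q ≠ p` elsewhere satisfies the
equation; these `2^λ` functions are pairwise distinct below `λ`, so no `N_η` of a cover contains
two of them, and a cover needs at least `2^λ > κ` pieces.
-/

variable {K : Type u} {A : Type v}

theorem isOpenInit_of_eqOn_Iio [LinearOrder K] {U : Set (K → K)} (b : K)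
    (hU : ∀ f ∈ U, ∀ g, EqOn f g (Iio b) → g ∈ U) : IsOpenInit U :=
  fun f hf => ⟨b, f, fun _ _ => rfl, fun g hg => hU f hf g fun i hi => (hg i hi).symm⟩

theorem isOpenInit_setOf_apply_eq [LinearOrder K] {x y b : K} (hx : x < b) (hy : y < b) :
    IsOpenInit {f : K → K | f x = f y} :=
  isOpenInit_of_eqOn_Iio b fun f hf g hfg => by
    simpa only [mem_ofPred_eq, hfg hx, hfg hy] using hf

theorem isOpenInit_compl_setOf_apply_eq [LinearOrder K] {x y b : K} (hx : x < b) (hy : y < b) :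
    IsOpenInit {f : K → K | f x = f y}ᶜ :=
  isOpenInit_of_eqOn_Iio b fun f hf g hfg => by
    simpa only [mem_compl_iff, mem_ofPred_eq, hfg hx, hfg hy] using hf

theorem mem_of_nbhd_subset_setOf_apply_eq [Nontrivial A] {Y : Set K} {η : K → A} {x y : K}
    (hxy : x ≠ y) (h : nbhd Y η ⊆ {f : K → A | f x = f y}) : y ∈ Y := by
  classical
  by_contra hy
  obtain ⟨v, hv⟩ := exists_ne (η x)
  have hmem : Function.update η y v ∈ nbhd Y η := fun i hi =>
    Function.update_of_ne (ne_of_mem_of_not_mem hi hy) _ _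
  have heq : η x = v := by
    simpa only [mem_ofPred_eq, Function.update_of_ne hxy, Function.update_self] using h hmem
  exact hv heq.symm

theorem mk_le_of_range_subset_iUnion_nbhd {β ι : Type u} {Y : Set K} {Z : ι → Set K}
    {η : ι → K → A} (F : β → K → A) (hF : ∀ u v, EqOn (F u) (F v) Y → u = v)
    (hYZ : ∀ i, Y ⊆ Z i) (hcover : range F ⊆ ⋃ i, nbhd (Z i) (η i)) : #β ≤ #ι := by
  choose I hI using fun u => mem_iUnion.1 (hcover (mem_range_self u))
  refine mk_le_of_injective (f := I) fun u v huv => hF u v fun z hz => ?_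
  rw [hI u z (hYZ _ hz), huv, ← hI v z (hYZ _ hz)]

theorem two_pow_mk_le_of_setOf_apply_eq_subset_iUnion_nbhd [Nontrivial A] {ι : Type u}
    {Y : Set K} {Z : ι → Set K} {η : ι → K → A} {x y : K} (hx : x ∉ Y) (hy : y ∉ Y)
    (hYZ : ∀ i, Y ⊆ Z i) (hS : {f : K → A | f x = f y} ⊆ ⋃ i, nbhd (Z i) (η i)) :
    2 ^ #Y ≤ #ι := by
  classical
  obtain ⟨p, q, hpq⟩ := exists_pair_ne A
  let F : Set Y → K → A := fun s z => if z ∈ Subtype.val '' s then p else q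
  have hF : ∀ s t, EqOn (F s) (F t) Y → s = t := by
    intro s t hst
    ext w
    have := hst w.2
    simp only [F, Subtype.val_injective.mem_set_image] at this
    by_cases hs : w ∈ s <;> by_cases ht : w ∈ t <;> simp_all
  have hFS : range F ⊆ {f : K → A | f x = f y} := by
    rintro _ ⟨s, rfl⟩
    have hx' : x ∉ Subtype.val '' s := fun ⟨w, _, hw⟩ => hx (hw ▸ w.2)
    have hy' : y ∉ Subtype.val '' s := fun ⟨w, _, hw⟩ => hy (hw ▸ w.2)
    simp only [mem_ofPred_eq, F, if_neg hx', if_neg hy']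
  rw [← mk_set]
  exact mk_le_of_range_subset_iUnion_nbhd F hF hYZ (hFS.trans hS)

/-- Let κ > λ be infinite cardinals with 2^λ > κ. Then the set
{f ∈ κ^κ : f(λ) = f(λ+1)} is clopen in the topology generated by the sets N_η
(η : α → κ, α < κ), but it is not a union of at most κ many such sets N_η. -/
theorem statement1 (κ lam : Cardinal.{u}) (hlam : ℵ₀ ≤ lam) (hlt : lam < κ)
    (h2 : κ < (2 : Cardinal.{u}) ^ lam)
    (K : Type u) [LinearOrder K] [IsWellOrder K (· < ·)]
    (hK : Ordinal.type ((· < ·) : K → K → Prop) = κ.ord)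
    (x y : K) (hx : Ordinal.typein ((· < ·) : K → K → Prop) x = lam.ord)
    (hy : Ordinal.typein ((· < ·) : K → K → Prop) y = lam.ord + 1) :
    IsOpenInit {f : K → K | f x = f y} ∧
    IsOpenInit {f : K → K | f x = f y}ᶜ ∧
    ¬ ∃ (ι : Type u) (a : ι → K) (η : ι → (K → K)),
        #ι ≤ κ ∧ {f : K → K | f x = f y} = ⋃ i, nbhd (Set.Iio (a i)) (η i) := by
  have hxy : x < y := by
    rw [← Ordinal.typein_lt_typein (· < ·), hx, hy]
    exact lt_add_one _
  have : NoMaxOrder K := Ordinal.isSuccPrelimit_type_lt_iff.1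
    (hK ▸ (isSuccLimit_ord (hlam.trans hlt.le)).isSuccPrelimit)
  have : Nontrivial K := ⟨x, y, hxy.ne⟩
  obtain ⟨b, hyb⟩ := exists_gt y
  refine ⟨isOpenInit_setOf_apply_eq (hxy.trans hyb) hyb,
    isOpenInit_compl_setOf_apply_eq (hxy.trans hyb) hyb, ?_⟩
  rintro ⟨ι, a, η, hι, hU⟩
  have hya : ∀ i, y < a i := fun i => show y ∈ Iio (a i) from
    mem_of_nbhd_subset_setOf_apply_eq hxy.ne (hU ▸ subset_iUnion _ i)
  have hcard := two_pow_mk_le_of_setOf_apply_eq_subset_iUnion_nbhd (Y := Iio x) (lt_irrefl x)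
    hxy.not_gt (fun i => Iio_subset_Iio (hxy.trans (hya i)).le) hU.subset
  have hIio : #(Iio x) = lam := by
    rw [← card_ord lam, ← hx]
    exact (Ordinal.card_typein (r := ((· < ·) : K → K → Prop)) x).symm
  exact h2.not_ge (hIio ▸ hcard |>.trans hι)

end GDST
end

section
/- Suppose κ is a regular uncountable cardinal with 2^ω > κ. Let X be the set of all strictly increasing functions f : ω → κ, identified with the set U = ⋃_{f ∈ X} N_f ⊆ κ^κ where N_f = {ζ ∈ κ^κ : f ⊆ ζ}. Then U is open, U is κ-Borel (indeed U = ⋂_{n<ω} ⋃_{f∈X} N_{f↾n}), but U is not a union of at most κ many basic κ-open sets. -/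
open Cardinal Set

universe u v w

namespace GDST

/-- Suppose κ is a regular uncountable cardinal with 2^ω > κ. Let X be the
set of all strictly increasing functions f : ω → κ and U = ⋃_{f ∈ X} N_f ⊆ κ^κ (where the
domain of f is identified with the first ω coordinates of κ, enumerated by `e`). Then U is
open, U is κ-Borel, but U is not a union of at most κ many basic κ-open sets. -/
theorem statement2 (κ : Cardinal.{u}) (hreg : κ.IsRegular) (hunc : ℵ₀ < κ)
    (h2 : κ < (2 : Cardinal.{u}) ^ (ℵ₀ : Cardinal.{u}))
    (K : Type u) [LinearOrder K] [IsWellOrder K (· < ·)]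
    (hK : Ordinal.type ((· < ·) : K → K → Prop) = κ.ord) (hcard : #K = κ)
    (e : ℕ → K) (he : ∀ n : ℕ, Ordinal.typein ((· < ·) : K → K → Prop) (e n) = (n : Ordinal.{u})) :
    IsOpenStd (⋃ f ∈ {f : ℕ → K | StrictMono f}, {ζ : K → K | ∀ n : ℕ, ζ (e n) = f n}) ∧
    KBorel (⋃ f ∈ {f : ℕ → K | StrictMono f}, {ζ : K → K | ∀ n : ℕ, ζ (e n) = f n}) ∧
    ¬ IsKOpen (⋃ f ∈ {f : ℕ → K | StrictMono f}, {ζ : K → K | ∀ n : ℕ, ζ (e n) = f n}) := by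
  classical
  set U := ⋃ f ∈ {f : ℕ → K | StrictMono f}, {ζ : K → K | ∀ n : ℕ, ζ (e n) = f n} with hU
  have einj : Function.Injective e := by
    intro m n h
    have h1 := he m
    rw [h, he n] at h1
    exact_mod_cast h1.symm
  have emono : StrictMono e := by
    intro m n h
    have h1 : Ordinal.typein ((· < ·) : K → K → Prop) (e m) <
        Ordinal.typein ((· < ·) : K → K → Prop) (e n) := by
      rw [he, he]; exact_mod_cast h
    exact (Ordinal.typein_lt_typein _).mp h1
  have memU : ∀ ζ : K → K, ζ ∈ U ↔ StrictMono (fun n => ζ (e n)) := by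
    intro ζ
    constructor
    · intro hζ
      simp only [hU, Set.mem_iUnion, Set.mem_setOf_eq] at hζ
      obtain ⟨f, hf, hz⟩ := hζ
      have hfe : (fun n => ζ (e n)) = f := funext hz
      rw [hfe]; exact hf
    · intro h
      simp only [hU, Set.mem_iUnion, Set.mem_setOf_eq]
      exact ⟨_, h, fun n => rfl⟩
  have hκK : ℵ₀ < #K := hcard ▸ hunc
  refine ⟨?_, ?_, ?_⟩
  · -- open
    intro ζ hζ
    refine ⟨nbhd (Set.range e) ζ, Or.inl ⟨Set.range e, ζ, ?_, rfl⟩, fun i _ => rfl, ?_⟩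
    · have : #(Set.range e) ≤ ℵ₀ := by
        have := (Set.countable_range e).to_subtype
        exact Cardinal.mk_le_aleph0
      exact this.trans_lt hκK
    · intro ζ' hζ'
      rw [memU] at hζ ⊢
      have heq : (fun n => ζ' (e n)) = fun n => ζ (e n) :=
        funext fun n => hζ' (e n) ⟨n, rfl⟩
      rw [heq]; exact hζ
  · -- Borel
    have hUe : U = ⋂ (n : ULift.{u} ℕ),
        {ζ : K → K | ζ (e n.down) < ζ (e (n.down + 1))} := by
      ext ζ
      rw [memU]
      simp only [Set.mem_iInter, Set.mem_setOf_eq]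
      constructor
      · intro h n; exact h (Nat.lt_succ_self n.down)
      · intro h; exact strictMono_nat_of_lt_succ (fun n => h ⟨n⟩)
    show MuBorel #K U
    rw [hUe]
    refine MuBorel.iInter _ _ ?_ (fun n => ?_)
    · have : #(ULift.{u} ℕ) = ℵ₀ := Cardinal.mk_denumerable _
      rw [this, hcard]; exact hunc.le
    · have hne : e n.down ≠ e (n.down + 1) := fun h => by
        have := einj h; omega
      have hset : {ζ : K → K | ζ (e n.down) < ζ (e (n.down + 1))} =
          ⋃ p : K × K, if p.1 < p.2 then
            nbhd {e n.down, e (n.down + 1)}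
              (fun x => if x = e n.down then p.1 else p.2) else ∅ := by
        ext ζ
        simp only [Set.mem_iUnion, Set.mem_setOf_eq]
        constructor
        · intro h
          refine ⟨(ζ (e n.down), ζ (e (n.down + 1))), ?_⟩
          rw [if_pos h]
          intro i hi
          rcases hi with rfl | hi
          · simp
          · rw [Set.mem_singleton_iff] at hi
            subst hi
            exact (if_neg hne.symm).symm
        · rintro ⟨p, hp⟩
          by_cases h : p.1 < p.2
          · rw [if_pos h] at hp
            have h1 := hp (e n.down) (by simp)
            have h2 := hp (e (n.down + 1)) (by simp)
            simp only [if_pos rfl] at h1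
            simp only [if_neg hne.symm] at h2
            rw [h1, h2]; exact h
          · rw [if_neg h] at hp; exact hp.elim
      rw [hset]
      refine MuBorel.iUnion _ _ ?_ (fun p => MuBorel.basic _ ?_)
      · simp only [Cardinal.mk_prod, Cardinal.lift_id]
        exact le_of_eq (Cardinal.mul_eq_self hκK.le)
      · by_cases h : p.1 < p.2
        · rw [if_pos h]
          refine Or.inl ⟨_, _, ?_, rfl⟩
          have : ({e n.down, e (n.down + 1)} : Set K).Finite :=
            (Set.finite_singleton _).insert _
          exact this.lt_aleph0.trans hκK
        · rw [if_neg h]; exact Or.inr rfl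
  · -- not κ-open
    rintro ⟨ι, S, hι, hbasic, hUS⟩
    -- every nonempty basic set contained in U covers all of range e
    have hsub : ∀ (Y : Set K) (η : K → K), nbhd Y η ⊆ U → (nbhd Y η).Nonempty →
        ∀ n, e n ∈ Y := by
      rintro Y η hsubU ⟨ζ₀, hζ₀⟩ n
      by_contra hn
      set ζ := Function.update ζ₀ (e n) (ζ₀ (e (n + 1))) with hζdef
      have hζS : ζ ∈ nbhd Y η := by
        intro i hi
        rw [hζdef, Function.update_of_ne (fun h => hn (by rw [← h]; exact hi))]
        exact hζ₀ i hi
      have hmono := (memU ζ).mp (hsubU hζS)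
      have h1 : ζ (e n) = ζ₀ (e (n + 1)) := Function.update_self _ _ _
      have h2 : ζ (e (n + 1)) = ζ₀ (e (n + 1)) :=
        Function.update_of_ne (fun h => by have := einj h; omega) _ _
      have heq : (fun m => ζ (e m)) n = (fun m => ζ (e m)) (n + 1) := by
        simp only []
        rw [h1, h2]
      have := hmono.injective heq
      omega
    -- each strictly increasing f gives an index determining f
    have key : ∀ f : ℕ → K, StrictMono f →
        ∃ i, (S i).Nonempty ∧ ∀ ζ ∈ S i, ∀ n, ζ (e n) = f n := by
      intro f hf
      set ζf := Function.extend e f (fun _ => e 0) with hζf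
      have hext : ∀ n, ζf (e n) = f n := fun n => einj.extend_apply f _ n
      have hζfU : ζf ∈ U := by
        rw [memU]
        have : (fun n => ζf (e n)) = f := funext hext
        rw [this]; exact hf
      rw [hUS] at hζfU
      obtain ⟨T, ⟨i, rfl⟩, hζfT⟩ := hζfU
      simp only [] at hζfT
      refine ⟨i, ⟨ζf, hζfT⟩, ?_⟩
      rcases hbasic i with ⟨Y, η, _, hSi⟩ | hSi
      · have hSU : S i ⊆ U := by rw [hUS]; exact Set.subset_iUnion S i
        rw [hSi] at hSU hζfT ⊢
        have hall := hsub Y η hSU ⟨ζf, hζfT⟩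
        intro ζ hζ n
        have := hζ (e n) (hall n)
        rw [this, ← hζfT (e n) (hall n), hext]
      · rw [hSi] at hζfT; exact hζfT.elim
    -- injection from Cantor space into ι
    have hcmono : ∀ g : ℕ → Bool, StrictMono (fun n => e (2 * n + cond (g n) 1 0)) := by
      intro g m n h
      apply emono
      rcases g m with _ | _ <;> rcases g n with _ | _ <;> simp <;> omega
    choose idx hne hidx using fun g : ULift.{u} (ℕ → Bool) =>
      key (fun n => e (2 * n + cond (g.down n) 1 0)) (hcmono g.down)
    have hinj : Function.Injective idx := by
      intro g h hgh
      obtain ⟨ζ, hζ⟩ := hne g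
      have h1 := hidx g ζ hζ
      have h2 := hidx h ζ (hgh ▸ hζ)
      ext n
      have := (h1 n).symm.trans (h2 n)
      have := einj this
      rcases hb : g.down n with _ | _ <;> rcases hb' : h.down n with _ | _ <;>
        rw [hb, hb'] at this <;> simp_all <;> omega
    have hle : (2 : Cardinal.{u}) ^ (ℵ₀ : Cardinal.{u}) ≤ #ι := by
      have hcan : #(ULift.{u} (ℕ → Bool)) = (2 : Cardinal.{u}) ^ (ℵ₀ : Cardinal.{u}) := by
        simp [Cardinal.mk_uLift, Cardinal.mk_arrow]
      rw [← hcan]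
      exact Cardinal.mk_le_of_injective hinj
    rw [hcard] at hι
    exact absurd (hle.trans hι) (not_le.mpr h2)

end GDST
end

section
/- Let κ be a regular cardinal with cf(κ) > ω. Then the property of a binary relation R ⊆ κ × κ being a well-ordering of κ is κ-Borel: the set of η ∈ κ^κ coding (via a fixed pairing) a relation R_η ⊆ κ × κ such that R_η is a well-order of κ is a κ-Borel subset of κ^κ. -/
/-!
A relation is a well-order iff it is trichotomous and well-founded, and trichotomy is an
intersection of `κ` conditions on single coordinates. For well-foundedness fix a well-order `<`
of `K` of type `κ`. As `cf κ > ω`, every descending `ω`-chain of `R` lies below some `a`, so `R`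
is well-founded iff each restriction `R_a = R ∩ {(y, x) | y < a}` is. Points of `R_a` have fewer
than `κ` predecessors, so by regularity `R_a` is well-founded iff every point has an `R_a`-rank
below `κ`; and "`x` has rank at most `b`" is `κ`-Borel by recursion on `b`, being the
intersection over `y` of "`y R_a x` implies that `y` has rank at most some `b' < b`".
-/

open Cardinal Set

universe u v w

namespace GDST

namespace MuBorel

variable {K : Type u} {A : Type v} {μ : Cardinal.{u}}

theorem setOf_const (p : Prop) : MuBorel μ {_η : K → A | p} := by
  have hempty : MuBorel μ (∅ : Set (K → A)) := basic _ (Or.inr rfl)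
  by_cases hp : p
  · simpa [hp] using hempty.compl
  · simpa [hp] using hempty

theorem setOf_not {p : (K → A) → Prop} (hp : MuBorel μ {η | p η}) :
    MuBorel μ {η | ¬p η} :=
  hp.compl

theorem setOf_forall {ι : Type u} (hι : #ι ≤ μ) {p : ι → (K → A) → Prop}
    (hp : ∀ i, MuBorel μ {η | p i η}) : MuBorel μ {η | ∀ i, p i η} := by
  rw [ofPred_forall]
  exact iInter ι _ hι hp

theorem setOf_exists {ι : Type u} (hι : #ι ≤ μ) {p : ι → (K → A) → Prop}
    (hp : ∀ i, MuBorel μ {η | p i η}) : MuBorel μ {η | ∃ i, p i η} := by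
  rw [ofPred_exists]
  exact iUnion ι _ hι hp

theorem setOf_or (hμ : ℵ₀ ≤ μ) {p q : (K → A) → Prop} (hp : MuBorel μ {η | p η})
    (hq : MuBorel μ {η | q η}) : MuBorel μ {η | p η ∨ q η} := by
  have h : {η | p η ∨ q η} = {η | ∃ b : ULift.{u} Bool, cond b.down (p η) (q η)} := by
    ext η
    simp [ULift.exists, or_comm]
  rw [h]
  exact setOf_exists (mk_le_aleph0.trans hμ) fun ⟨b⟩ => by cases b <;> assumption

theorem setOf_and (hμ : ℵ₀ ≤ μ) {p q : (K → A) → Prop} (hp : MuBorel μ {η | p η})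
    (hq : MuBorel μ {η | q η}) : MuBorel μ {η | p η ∧ q η} := by
  simpa only [not_or, not_not] using (setOf_or hμ hp.setOf_not hq.setOf_not).setOf_not

theorem setOf_imp (hμ : ℵ₀ ≤ μ) {p q : (K → A) → Prop} (hp : MuBorel μ {η | p η})
    (hq : MuBorel μ {η | q η}) : MuBorel μ {η | p η → q η} := by
  simpa only [imp_iff_not_or] using setOf_or hμ hp.setOf_not hq

theorem setOf_apply {A : Type u} (hK : 1 < #K) (hA : #A ≤ μ) (p : A → Prop) (c : K) :
    MuBorel μ {η : K → A | p (η c)} := by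
  have h : {η : K → A | p (η c)} = ⋃ v : {v // p v}, nbhd {c} fun _ => v.1 := by
    ext η
    simp [nbhd]
  rw [h]
  refine iUnion _ _ ((mk_subtype_le _).trans hA) fun v => basic _ (.inl ⟨{c}, _, ?_, rfl⟩)
  rwa [mk_singleton]

end MuBorel

theorem exists_forall_lt_of_mk_lt_cof {α : Type*} [LinearOrder α] {s : Set α}
    (hs : #s < Order.cof α) : ∃ a, ∀ x ∈ s, x < a := by
  by_contra! h
  exact (Order.cof_le h).not_gt hs

section Rank

variable {K : Type u} {A : Type v} {β : Type u} [LinearOrder β] [WellFoundedLT β]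
  (R : (K → A) → K → K → Prop)

/-- The paper's formula `φ^α_b(x)` (with `R` restricted below `α`): in `R η`, the element `x`
has rank at most `b`. -/
noncomputable def rankLE : β → K → Set (K → A) :=
  WellFoundedLT.fix fun b rankLT x => {η | ∀ y, R η y x → ∃ b', ∃ h : b' < b, η ∈ rankLT b' h y}

variable {R}

theorem mem_rankLE {b : β} {x : K} {η : K → A} :
    η ∈ rankLE R b x ↔ ∀ y, R η y x → ∃ b' < b, η ∈ rankLE R b' y := by
  rw [rankLE, WellFoundedLT.fix_eq]
  simp only [mem_ofPred_eq, exists_prop]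

theorem acc_of_mem_rankLE {b : β} {x : K} {η : K → A} (h : η ∈ rankLE R b x) : Acc (R η) x := by
  induction b using WellFoundedLT.induction generalizing x with
  | _ b ih =>
    refine ⟨_, fun y hy => ?_⟩
    obtain ⟨b', hb', hy'⟩ := mem_rankLE.1 h y hy
    exact ih b' hb' hy'

theorem muBorel_rankLE {μ : Cardinal.{u}} (hμ : ℵ₀ ≤ μ) (hK : #K ≤ μ) (hβ : #β ≤ μ)
    (hR : ∀ y x, MuBorel μ {η | R η y x}) (b : β) (x : K) : MuBorel μ (rankLE R b x) := by
  induction b using WellFoundedLT.induction generalizing x with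
  | _ b ih =>
    have h : rankLE R b x = {η | ∀ y, R η y x → ∃ b' : Iio b, η ∈ rankLE R (b' : β) y} := by
      ext η
      rw [mem_rankLE]
      simp only [mem_ofPred_eq, Subtype.exists, mem_Iio, exists_prop]
    rw [h]
    exact .setOf_forall hK fun y => .setOf_imp hμ (hR y x) <|
      .setOf_exists ((mk_subtype_le _).trans hβ) fun b' => ih b' b'.2 y

theorem exists_mem_rankLE_of_acc {x : K} {η : K → A} (h : Acc (R η) x)
    (hsmall : ∀ x, #{y // R η y x} < Order.cof β) : ∃ b : β, η ∈ rankLE R b x := by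
  induction h with
  | intro x _ ih =>
    choose f hf using fun y : {y // R η y x} => ih y.1 y.2
    obtain ⟨b, hb⟩ := exists_forall_lt_of_mk_lt_cof (mk_range_le.trans_lt (hsmall x))
    exact ⟨b, mem_rankLE.2 fun y hy => ⟨f ⟨y, hy⟩, hb _ (mem_range_self _), hf _⟩⟩

end Rank

theorem wellFounded_of_forall_wellFounded_restrict {K β : Type*} [LinearOrder β]
    (hβ : ℵ₀ < Order.cof β) (e : K → β) {r : K → K → Prop}
    (h : ∀ a : β, WellFounded fun y x => r y x ∧ e y < a) : WellFounded r := by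
  refine wellFounded_iff_isEmpty_descending_chain.2 ⟨fun ⟨f, hf⟩ => ?_⟩
  obtain ⟨a, ha⟩ := exists_forall_lt_of_mk_lt_cof
    (((countable_range (e ∘ f)).le_aleph0).trans_lt hβ)
  exact (wellFounded_iff_isEmpty_descending_chain.1 (h a)).false
    ⟨f, fun n => ⟨hf n, ha _ (mem_range_self (n + 1))⟩⟩

theorem isWellOrder_iff {α : Type*} {r : α → α → Prop} :
    IsWellOrder α r ↔ (∀ a b, r a b ∨ a = b ∨ r b a) ∧ WellFounded r :=
  ⟨fun _ => ⟨trichotomous_of r, IsWellFounded.wf⟩, fun ⟨htri, hwf⟩ =>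
    { wf := hwf, toTrichotomous := Std.trichotomous_of_rel_or_eq_or_rel_swap (htri _ _) }⟩

section WellFounded

variable {K : Type u} {A : Type v} {β : Type u} [LinearOrder β] [WellFoundedLT β]
  {R : (K → A) → K → K → Prop} (e : K → β)

theorem wellFounded_iff_forall_exists_mem_rankLE (hβ : ℵ₀ < Order.cof β)
    (hsmall : ∀ a, #{y // e y < a} < Order.cof β) (η : K → A) :
    WellFounded (R η) ↔ ∀ a x, ∃ b : β, η ∈ rankLE (fun η y x => R η y x ∧ e y < a) b x := by
  constructor
  · intro hwf a x
    refine exists_mem_rankLE_of_acc (Subrelation.accessible And.left (hwf.apply x)) fun x => ?_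
    exact (mk_le_mk_of_subset fun y hy => hy.2).trans_lt (hsmall a)
  · intro h
    refine wellFounded_of_forall_wellFounded_restrict hβ e fun a => ⟨fun x => ?_⟩
    obtain ⟨b, hb⟩ := h a x
    exact acc_of_mem_rankLE hb

theorem muBorel_setOf_wellFounded {μ : Cardinal.{u}} (hμ : ℵ₀ ≤ μ) (hK : #K ≤ μ) (hβμ : #β ≤ μ)
    (hβ : ℵ₀ < Order.cof β) (hsmall : ∀ a, #{y // e y < a} < Order.cof β)
    (hR : ∀ y x, MuBorel μ {η | R η y x}) : MuBorel μ {η | WellFounded (R η)} := by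
  simp only [wellFounded_iff_forall_exists_mem_rankLE e hβ hsmall]
  refine .setOf_forall hβμ fun a => .setOf_forall hK fun x => .setOf_exists hβμ fun b => ?_
  exact muBorel_rankLE hμ hK hβμ (fun y x => .setOf_and hμ (hR y x) (.setOf_const (e y < a))) b x

end WellFounded

theorem kBorel_setOf_isWellOrder {K : Type u} {A : Type v} (hreg : (#K).IsRegular) (hK : ℵ₀ < #K)
    {R : (K → A) → K → K → Prop} (hR : ∀ a b, KBorel {η | R η a b}) :
    KBorel {η | IsWellOrder K (R η)} := by
  have hcof : Order.cof (#K).ord.ToType = #K := by rw [Ordinal.cof_toType, hreg.cof_ord]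
  have hcard : #(#K).ord.ToType = #K := by simp
  obtain ⟨e⟩ : Nonempty (K ≃ (#K).ord.ToType) := Cardinal.eq.1 hcard.symm
  have hsmall : ∀ a, #{y // e y < a} < Order.cof (#K).ord.ToType := fun a => by
    rw [hcof]
    exact (mk_preimage_of_injective _ (Iio a) e.injective).trans_lt
      ((mk_Iio_lt a (by simp)).trans_eq hcard)
  simp only [isWellOrder_iff]
  refine .setOf_and hreg.aleph0_le ?_ ?_
  · exact .setOf_forall le_rfl fun a => .setOf_forall le_rfl fun b =>
      .setOf_or hreg.aleph0_le (hR a b) (.setOf_or hreg.aleph0_le (.setOf_const _) (hR b a))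
  · exact muBorel_setOf_wellFounded e hreg.aleph0_le le_rfl hcard.le (by rwa [hcof]) hsmall hR

theorem statement9_general (K : Type u) [LinearOrder K]
    (hreg : (#K).IsRegular) (hcof : ℵ₀ < (#K).ord.cof)
    (π : K × K ≃ K) (z : K) :
    KBorel {η : K → K | IsWellOrder K (fun a b => z < η (π (a, b)))} := by
  have hK : ℵ₀ < #K := hreg.cof_ord ▸ hcof
  exact kBorel_setOf_isWellOrder hreg hK fun a b =>
    .setOf_apply (one_lt_aleph0.trans hK) le_rfl (z < ·) (π (a, b))

/-- Let κ be a regular cardinal with cf(κ) > ω. Then the set of η ∈ κ^κ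
coding (via a fixed pairing π, with η(π(a,b)) > 0 meaning a R b) a relation that is a
well-ordering of κ is a κ-Borel subset of κ^κ. -/
theorem statement9 (K : Type u) [LinearOrder K]
    (hreg : (#K).IsRegular) (hcof : ℵ₀ < (#K).ord.cof)
    (π : K × K ≃ K) (z : K) (hz : ∀ x : K, z ≤ x) :
    KBorel {η : K → K | IsWellOrder K (fun a b => z < η (π (a, b)))} :=
  statement9_general K hreg hcof π z

end GDST
end

section
/- Let λ ≤ κ be infinite cardinals. Every (κ,λ)-Borel* subset of κ^κ is the projection of a κ-closed subset of κ^κ × κ^κ. -/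
open Cardinal Set

universe u v w

namespace GDST

/-- A labelled tree: a carrier with a partial-order relation, a boolean label on nodes
(true = union-node, false = intersection-node) and a set label on (leaf) nodes. -/
structure LTree (K : Type u) : Type (u + 1) where
  T : Type u
  le : T → T → Prop
  le_refl : ∀ t, le t t
  le_antisymm : ∀ a b, le a b → le b a → a = b
  le_trans : ∀ a b c, le a b → le b c → le a c
  isUnion : T → Bool
  leafLab : T → Set (K → K)

namespace LTree

variable {K : Type u} (G : LTree K)

def lt (a b : G.T) : Prop := G.le a b ∧ a ≠ b

def IsLeaf (t : G.T) : Prop := ∀ s, G.le t s → s = t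

def ImmSucc (a b : G.T) : Prop := G.lt a b ∧ ∀ c, G.le a c → G.le c b → c = a ∨ c = b

/-- No chain of order type κ. -/
def NoKBranch [LinearOrder K] : Prop :=
  ¬ ∃ f : K → G.T, ∀ a b : K, a < b → G.lt (f a) (f b)

/-- A good labelled (κ,λ)-tree: a tree of size at most λ without κ-branches, each node
having at most κ immediate successors, increasing chains having suprema, and leaves
labelled by basic κ-open sets. -/
def Good [LinearOrder K] (lam : Cardinal.{u}) : Prop :=
  G.NoKBranch ∧
  (∀ t : G.T, #{s : G.T // G.ImmSucc t s} ≤ #K) ∧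
  #G.T ≤ lam ∧
  (∀ C : Set G.T, (∀ a ∈ C, ∀ b ∈ C, G.le a b ∨ G.le b a) → C.Nonempty →
    ∃ s : G.T, (∀ c ∈ C, G.le c s) ∧ ∀ u : G.T, (∀ c ∈ C, G.le c u) → G.le s u) ∧
  (∀ t : G.T, G.IsLeaf t → IsBasicOpen (G.leafLab t))

/-- A weak good labelled κ-tree: as Good but with no restriction on the size of the tree. -/
def GoodWeak [LinearOrder K] : Prop :=
  G.NoKBranch ∧
  (∀ t : G.T, #{s : G.T // G.ImmSucc t s} ≤ #K) ∧
  (∀ C : Set G.T, (∀ a ∈ C, ∀ b ∈ C, G.le a b ∨ G.le b a) → C.Nonempty →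
    ∃ s : G.T, (∀ c ∈ C, G.le c s) ∧ ∀ u : G.T, (∀ c ∈ C, G.le c u) → G.le s u) ∧
  (∀ t : G.T, G.IsLeaf t → IsBasicOpen (G.leafLab t))

/-- A (positional) strategy of player II: at each union-node it picks an immediate successor. -/
def Legal (σ : G.T → G.T) : Prop :=
  ∀ t : G.T, ¬ G.IsLeaf t → G.isUnion t = true → G.ImmSucc t (σ t)

/-- A play of the game GB(ξ,(T,L)) in which II follows σ: a downward closed maximal chain
which at union-nodes follows σ. -/
def IsPlay (σ : G.T → G.T) (c : Set G.T) : Prop :=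
  c.Nonempty ∧
  (∀ a ∈ c, ∀ b ∈ c, G.le a b ∨ G.le b a) ∧
  (∀ a ∈ c, ∀ b : G.T, G.le b a → b ∈ c) ∧
  (∀ t ∈ c, ¬ G.IsLeaf t → ∃ s ∈ c, G.lt t s) ∧
  (∀ t ∈ c, ¬ G.IsLeaf t → G.isUnion t = true → σ t ∈ c)

/-- σ is a winning strategy of II in GB(ξ,(T,L)): every play following σ reaches a leaf
whose label contains ξ. -/
def Wins (σ : G.T → G.T) (ξ : K → K) : Prop :=
  ∀ c : Set G.T, G.IsPlay σ c → ∃ t ∈ c, G.IsLeaf t ∧ ξ ∈ G.leafLab t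

/-- II has a winning strategy in GB(ξ,(T,L)). -/
def IIWins (ξ : K → K) : Prop := ∃ σ : G.T → G.T, G.Legal σ ∧ G.Wins σ ξ

/-- (T,L) is a Borel*-code: there is a coding of strategies of II by elements of a κ-closed
set D ⊆ κ^κ such that every winnable game is won by a coded strategy and the set of pairs
(ξ,η) for which the coded strategy wins is κ-Borel. -/
def IsCode : Prop :=
  ∃ (D : Set (K → K)) (π : (K → K) → G.T → G.T),
    IsKClosed D ∧
    (∀ η ∈ D, G.Legal (π η)) ∧
    (∀ ξ : K → K, G.IIWins ξ → ∃ η ∈ D, G.Wins (π η) ξ) ∧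
    KBorel2 {p : (K → K) × (K → K) | p.2 ∈ D ∧ G.Wins (π p.2) p.1}

end LTree

/-- X is a (κ,λ)-Borel* set: coded by some good labelled (κ,λ)-tree which is a Borel*-code. -/
def IsBorelStar {K : Type u} [LinearOrder K] (lam : Cardinal.{u}) (X : Set (K → K)) : Prop :=
  ∃ G : LTree K, G.Good lam ∧ G.IsCode ∧ ∀ ξ : K → K, ξ ∈ X ↔ G.IIWins ξ

end GDST

namespace GDST

section Aux

variable {K : Type u} {A : Type v}

/-- A neighborhood is determined by any of its members. -/
lemma nbhd_eq_of_mem {Y : Set K} {η ζ : K → A} (h : ζ ∈ nbhd Y η) :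
    nbhd Y η = nbhd Y ζ := by
  ext θ
  exact ⟨fun hθ i hi => (hθ i hi).trans (h i hi).symm,
         fun hθ i hi => (hθ i hi).trans (h i hi)⟩

lemma isBasicOpen_empty : IsBasicOpen (∅ : Set (K → A)) := Or.inr rfl

lemma nbhd_empty_domain (f : K → A) : nbhd (∅ : Set K) f = Set.univ := by
  ext θ; simp [nbhd]

lemma isBasicOpen_univ [Nonempty A] (hinf : ℵ₀ ≤ #K) : IsBasicOpen (univ : Set (K → A)) := by
  obtain ⟨a⟩ : Nonempty A := inferInstance
  exact Or.inl ⟨∅, fun _ => a, by simpa using aleph0_pos.trans_le hinf,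
    (nbhd_empty_domain _).symm⟩

lemma isBasicOpen_inter (hinf : ℵ₀ ≤ #K) {S T : Set (K → A)}
    (hS : IsBasicOpen S) (hT : IsBasicOpen T) : IsBasicOpen (S ∩ T) := by
  rcases hS with ⟨Y₁, η₁, hY₁, rfl⟩ | rfl
  · rcases hT with ⟨Y₂, η₂, hY₂, rfl⟩ | rfl
    · by_cases h : (nbhd Y₁ η₁ ∩ nbhd Y₂ η₂).Nonempty
      · obtain ⟨ζ, hζ₁, hζ₂⟩ := h
        refine Or.inl ⟨Y₁ ∪ Y₂, ζ,
          lt_of_le_of_lt (Cardinal.mk_union_le _ _) (Cardinal.add_lt_of_lt hinf hY₁ hY₂), ?_⟩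
        ext θ
        constructor
        · rintro ⟨h1, h2⟩ i hi
          rcases hi with hi | hi
          · exact (h1 i hi).trans (hζ₁ i hi).symm
          · exact (h2 i hi).trans (hζ₂ i hi).symm
        · intro hθ
          exact ⟨fun i hi => (hθ i (Or.inl hi)).trans (hζ₁ i hi),
                 fun i hi => (hθ i (Or.inr hi)).trans (hζ₂ i hi)⟩
      · exact Or.inr (not_nonempty_iff_eq_empty.mp h)
    · exact Or.inr (by simp)
  · exact Or.inr (by simp)

/-- Preimage of a neighborhood under precomposition with an injective map. -/
lemma preimage_comp_nbhd [Nonempty K] {v : K → K} (hv : Function.Injective v)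
    (Y : Set K) (f : K → A) :
    (fun η : K → A => η ∘ v) ⁻¹' nbhd Y f = nbhd (v '' Y) (f ∘ Function.invFun v) := by
  ext η
  constructor
  · rintro h m ⟨i, hi, rfl⟩
    simpa [Function.leftInverse_invFun hv i] using h i hi
  · intro h i hi
    simpa [Function.leftInverse_invFun hv i] using h (v i) ⟨i, hi, rfl⟩

lemma isBasicOpen_preimage_comp (hinf : ℵ₀ ≤ #K) {v : K → K} (hv : Function.Injective v)
    {S : Set (K → A)} (hS : IsBasicOpen S) :
    IsBasicOpen ((fun η : K → A => η ∘ v) ⁻¹' S) := by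
  haveI : Nonempty K := Cardinal.mk_ne_zero_iff.mp (aleph0_pos.trans_le hinf).ne'
  rcases hS with ⟨Y, f, hY, rfl⟩ | rfl
  · exact Or.inl ⟨v '' Y, f ∘ Function.invFun v,
      lt_of_le_of_lt Cardinal.mk_image_le hY, preimage_comp_nbhd hv Y f⟩
  · exact Or.inr (by simp)

/-- Canonical `K`-indexed form of a κ-open set. -/
lemma isMuOpen_canon {U : Set (K → A)} (h : IsMuOpen #K U) :
    ∃ f : K → Set (K → A), (∀ k, IsBasicOpen (f k)) ∧ U = ⋃ k, f k := by
  obtain ⟨ι, f, hι, hb, rfl⟩ := h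
  by_cases hι' : Nonempty ι
  · obtain ⟨g⟩ := (Cardinal.le_def ι K).mp hι
    exact ⟨fun k => f (Function.invFun g k), fun k => hb _,
      ((Function.invFun_surjective g.injective).iUnion_comp f).symm⟩
  · refine ⟨fun _ => ∅, fun _ => isBasicOpen_empty, ?_⟩
    rw [not_nonempty_iff] at hι'
    simp

lemma isMuOpen2_canon {B : Type w} {U : Set ((K → A) × (K → B))} (h : IsMuOpen2 #K U) :
    ∃ f : K → Set ((K → A) × (K → B)), (∀ k, IsBasicOpen2 (f k)) ∧ U = ⋃ k, f k := by
  obtain ⟨ι, f, hι, hb, rfl⟩ := h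
  by_cases hι' : Nonempty ι
  · obtain ⟨g⟩ := (Cardinal.le_def ι K).mp hι
    exact ⟨fun k => f (Function.invFun g k), fun k => hb _,
      ((Function.invFun_surjective g.injective).iUnion_comp f).symm⟩
  · refine ⟨fun _ => ∅, fun _ => ⟨∅, ∅, isBasicOpen_empty, isBasicOpen_empty, by simp⟩, ?_⟩
    rw [not_nonempty_iff] at hι'
    simp

lemma isBasicOpen2_inter (hinf : ℵ₀ ≤ #K) {B : Type w} {S T : Set ((K → A) × (K → B))}
    (hS : IsBasicOpen2 S) (hT : IsBasicOpen2 T) : IsBasicOpen2 (S ∩ T) := by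
  obtain ⟨S₁, S₂, hS₁, hS₂, rfl⟩ := hS
  obtain ⟨T₁, T₂, hT₁, hT₂, rfl⟩ := hT
  exact ⟨S₁ ∩ T₁, S₂ ∩ T₂, isBasicOpen_inter hinf hS₁ hT₁, isBasicOpen_inter hinf hS₂ hT₂,
    Set.prod_inter_prod⟩

/-- The complement of a basic open set is κ-open (in `K`-indexed form). -/
lemma compl_basicOpen_canon (hinf : ℵ₀ ≤ #K) {S : Set (K → K)} (hS : IsBasicOpen S) :
    ∃ f : K × K → Set (K → K), (∀ k, IsBasicOpen (f k)) ∧ Sᶜ = ⋃ k, f k := by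
  haveI : Nonempty K := Cardinal.mk_ne_zero_iff.mp (aleph0_pos.trans_le hinf).ne'
  rcases hS with ⟨Y, g, hY, rfl⟩ | rfl
  · classical
    refine ⟨fun q => if q.1 ∈ Y ∧ q.2 ≠ g q.1 then nbhd {q.1} (fun _ => q.2) else ∅, ?_, ?_⟩
    · intro q
      by_cases h : q.1 ∈ Y ∧ q.2 ≠ g q.1
      · show IsBasicOpen (if _ then _ else _)
        rw [if_pos h]
        exact Or.inl ⟨{q.1}, fun _ => q.2, by
          simpa using one_lt_aleph0.trans_le hinf, rfl⟩
      · show IsBasicOpen (if _ then _ else _)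
        rw [if_neg h]
        exact isBasicOpen_empty
    · ext ζ
      simp only [mem_compl_iff, nbhd, mem_setOf_eq, mem_iUnion]
      constructor
      · intro hc
        push_neg at hc
        obtain ⟨i, hi, hne⟩ := hc
        refine ⟨(i, ζ i), ?_⟩
        show ζ ∈ (if _ then _ else _)
        rw [if_pos ⟨hi, hne⟩]
        intro j hj
        rw [Set.mem_singleton_iff] at hj
        rw [hj]
      · rintro ⟨⟨i, a⟩, hq⟩
        change ζ ∈ (if _ then _ else _) at hq
        by_cases h : i ∈ Y ∧ a ≠ g i
        · rw [if_pos h] at hq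
          intro hall
          exact h.2 ((hq i rfl).symm.trans (hall i h.1))
        · rw [if_neg h] at hq
          exact absurd hq (Set.notMem_empty ζ)
  · refine ⟨fun _ => Set.univ, fun _ => isBasicOpen_univ hinf, ?_⟩
    rw [Set.compl_empty]
    exact (Set.iUnion_const _).symm

end Aux

section MainAux

variable {K : Type u}

/-- `B` is the projection of a κ-closed subset of the product. -/
def ProjCl (B : Set (K → K)) : Prop :=
  ∃ C : Set ((K → K) × (K → K)), IsKClosed2 C ∧ B = Prod.fst '' C

lemma isBasicOpen2_preimage_snd_comp (hinf : ℵ₀ ≤ #K) {v : K → K}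
    (hv : Function.Injective v) {S : Set ((K → K) × (K → K))} (hS : IsBasicOpen2 S) :
    IsBasicOpen2 ((fun p : (K → K) × (K → K) => (p.1, p.2 ∘ v)) ⁻¹' S) := by
  obtain ⟨S₁, S₂, h1, h2, rfl⟩ := hS
  refine ⟨S₁, (fun η : K → K => η ∘ v) ⁻¹' S₂, h1, isBasicOpen_preimage_comp hinf hv h2, ?_⟩
  ext p
  simp [Set.mem_prod]

lemma projCl_basic (hinf : ℵ₀ ≤ #K) {S : Set (K → K)} (hS : IsBasicOpen S) : ProjCl S := by
  haveI : Nonempty K := Cardinal.mk_ne_zero_iff.mp (aleph0_pos.trans_le hinf).ne'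
  refine ⟨S ×ˢ Set.univ, ?_, (Set.fst_image_prod S univ_nonempty).symm⟩
  obtain ⟨f, hf, hfe⟩ := compl_basicOpen_canon hinf hS
  refine ⟨K × K, fun k => f k ×ˢ Set.univ, by simp [Cardinal.mul_eq_self hinf], fun k =>
    ⟨f k, univ, hf k, isBasicOpen_univ hinf, rfl⟩, ?_⟩
  have : (S ×ˢ (univ : Set (K → K)))ᶜ = Sᶜ ×ˢ Set.univ := by
    ext p; simp [Set.mem_prod]
  rw [this, hfe, Set.iUnion_prod_const]

/-- κ-union of projections of closed sets is a projection of a closed set. -/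
lemma projCl_iUnion_canon (hinf : ℵ₀ ≤ #K) (r : (K ⊕ K) ≃ K)
    (f : K → Set (K → K)) (hf : ∀ a, ProjCl (f a)) : ProjCl (⋃ a, f a) := by
  classical
  haveI : Nonempty K := Cardinal.mk_ne_zero_iff.mp (aleph0_pos.trans_le hinf).ne'
  obtain ⟨k₀⟩ : Nonempty K := inferInstance
  choose C hCcl hCeq using hf
  choose g hg hge using fun a => isMuOpen2_canon (hCcl a)
  set v : K → K := fun i => r (Sum.inl i) with hv
  have hvinj : Function.Injective v := fun a b h => Sum.inl_injective (r.injective h)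
  set j₀ : K := r (Sum.inr k₀) with hj₀
  set Φ : (K → K) × (K → K) → (K → K) × (K → K) := fun p => (p.1, p.2 ∘ v) with hΦ
  refine ⟨{p | Φ p ∈ C (p.2 j₀)}, ?_, ?_⟩
  · -- closedness
    refine ⟨K × (K × K), fun q =>
      (Set.univ ×ˢ nbhd {j₀} (fun _ => q.1)) ∩ (Φ ⁻¹' g q.1 q.2.2), ?_, ?_, ?_⟩
    · simp [Cardinal.mul_eq_self hinf]
    · intro q
      refine isBasicOpen2_inter hinf ⟨univ, nbhd {j₀} (fun _ => q.1), isBasicOpen_univ hinf,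
        Or.inl ⟨{j₀}, fun _ => q.1, by simpa using one_lt_aleph0.trans_le hinf, rfl⟩, ?_⟩
        (isBasicOpen2_preimage_snd_comp hinf hvinj (hg q.1 q.2.2))
      ext p; simp [Set.mem_prod]
    · ext p
      simp only [mem_compl_iff, mem_setOf_eq, mem_iUnion, mem_inter_iff, mem_preimage,
        Set.mem_prod, mem_univ, true_and, nbhd, mem_setOf_eq]
      constructor
      · intro h
        have : Φ p ∈ (C (p.2 j₀))ᶜ := h
        rw [hge (p.2 j₀)] at this
        obtain ⟨k, hk⟩ := mem_iUnion.mp this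
        exact ⟨(p.2 j₀, k, k), fun i hi => by rw [hi], hk⟩
      · rintro ⟨⟨a, k, k'⟩, ha, hk⟩ hmem
        have hpa : p.2 j₀ = a := ha j₀ rfl
        have : Φ p ∈ (C a)ᶜ := by
          rw [hge a]
          exact mem_iUnion.mpr ⟨k', hk⟩
        rw [hpa] at hmem
        exact this hmem
  · -- projection
    ext ξ
    simp only [mem_iUnion, Set.mem_image, mem_setOf_eq]
    constructor
    · rintro ⟨a, ha⟩
      rw [hCeq a] at ha
      obtain ⟨p, hmem, h⟩ := ha
      rw [← h]
      refine ⟨(p.1, fun m => Sum.elim p.2 (fun _ => a) (r.symm m)), ?_, rfl⟩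
      have h1 : (fun m => Sum.elim p.2 (fun _ => a) (r.symm m)) j₀ = a := by
        simp [hj₀]
      have h2 : ((fun m => Sum.elim p.2 (fun _ => a) (r.symm m)) ∘ v) = p.2 := by
        funext i; simp [hv]
      show Φ _ ∈ C _
      rw [hΦ]
      simp only [h1, h2]
      rwa [Prod.mk.eta]
    · rintro ⟨p, hp, rfl⟩
      refine ⟨p.2 j₀, ?_⟩
      rw [hCeq (p.2 j₀)]
      exact ⟨Φ p, hp, rfl⟩

/-- κ-intersection of projections of closed sets is a projection of a closed set. -/
lemma projCl_iInter_canon (hinf : ℵ₀ ≤ #K) (s : K ≃ K × K)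
    (f : K → Set (K → K)) (hf : ∀ a, ProjCl (f a)) : ProjCl (⋂ a, f a) := by
  classical
  haveI : Nonempty K := Cardinal.mk_ne_zero_iff.mp (aleph0_pos.trans_le hinf).ne'
  choose C hCcl hCeq using hf
  choose g hg hge using fun a => isMuOpen2_canon (hCcl a)
  set v : K → K → K := fun a k => s.symm (a, k) with hv
  have hvinj : ∀ a, Function.Injective (v a) := fun a x y h => by
    have := s.symm.injective h
    exact (Prod.mk.injEq _ _ _ _).mp this |>.2
  set Φ : K → (K → K) × (K → K) → (K → K) × (K → K) := fun a p => (p.1, p.2 ∘ v a) with hΦ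
  refine ⟨{p | ∀ a, Φ a p ∈ C a}, ?_, ?_⟩
  · refine ⟨K × K, fun q => Φ q.1 ⁻¹' g q.1 q.2, by simp [Cardinal.mul_eq_self hinf],
      fun q => isBasicOpen2_preimage_snd_comp hinf (hvinj q.1) (hg q.1 q.2), ?_⟩
    ext p
    simp only [mem_compl_iff, mem_setOf_eq, not_forall, mem_iUnion, mem_preimage]
    constructor
    · rintro ⟨a, ha⟩
      have : Φ a p ∈ (C a)ᶜ := ha
      rw [hge a] at this
      obtain ⟨k, hk⟩ := mem_iUnion.mp this
      exact ⟨(a, k), hk⟩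
    · rintro ⟨⟨a, k⟩, hk⟩
      refine ⟨a, fun hmem => ?_⟩
      have : Φ a p ∈ (C a)ᶜ := by
        rw [hge a]; exact mem_iUnion.mpr ⟨k, hk⟩
      exact this hmem
  · ext ξ
    simp only [mem_iInter, Set.mem_image, mem_setOf_eq]
    constructor
    · intro h
      have hch : ∀ a, ∃ η, (ξ, η) ∈ C a := by
        intro a
        have := h a
        rw [hCeq a] at this
        obtain ⟨⟨ξ', η'⟩, hmem, heq⟩ := this
        obtain rfl : ξ' = ξ := heq
        exact ⟨η', hmem⟩
      choose η hη using hch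
      refine ⟨(ξ, fun m => η (s m).1 (s m).2), fun a => ?_, rfl⟩
      have : ((fun m => η (s m).1 (s m).2) ∘ v a) = η a := by
        funext k; simp [hv]
      show Φ a _ ∈ C a
      rw [hΦ]
      simp only [this]
      exact hη a
    · rintro ⟨p, hp, rfl⟩ a
      rw [hCeq a]
      exact ⟨Φ a p, hp a, rfl⟩

lemma projCl_iUnion (hinf : ℵ₀ ≤ #K) (r : (K ⊕ K) ≃ K) {ι : Type u} (hι : #ι ≤ #K)
    (f : ι → Set (K → K)) (hf : ∀ i, ProjCl (f i)) : ProjCl (⋃ i, f i) := by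
  by_cases hι' : Nonempty ι
  · obtain ⟨g⟩ := (Cardinal.le_def ι K).mp hι
    have := projCl_iUnion_canon hinf r (fun k => f (Function.invFun g k))
      (fun k => hf _)
    rwa [(Function.invFun_surjective g.injective).iUnion_comp f] at this
  · rw [not_nonempty_iff] at hι'
    rw [iUnion_of_empty f]
    exact projCl_basic hinf isBasicOpen_empty

lemma projCl_iInter (hinf : ℵ₀ ≤ #K) (s : K ≃ K × K) {ι : Type u} (hι : #ι ≤ #K)
    (f : ι → Set (K → K)) (hf : ∀ i, ProjCl (f i)) : ProjCl (⋂ i, f i) := by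
  haveI : Nonempty K := Cardinal.mk_ne_zero_iff.mp (aleph0_pos.trans_le hinf).ne'
  by_cases hι' : Nonempty ι
  · obtain ⟨g⟩ := (Cardinal.le_def ι K).mp hι
    have := projCl_iInter_canon hinf s (fun k => f (Function.invFun g k))
      (fun k => hf _)
    rwa [(Function.invFun_surjective g.injective).iInter_comp f] at this
  · rw [not_nonempty_iff] at hι'
    rw [iInter_of_empty f]
    exact projCl_basic hinf (isBasicOpen_univ hinf)

/-- Main induction: every κ-Borel set and its complement are projections of closed sets. -/
lemma muBorel_projCl (hinf : ℵ₀ ≤ #K) (r : (K ⊕ K) ≃ K) (s : K ≃ K × K)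
    {B : Set (K → K)} (hB : MuBorel #K B) : ProjCl B ∧ ProjCl Bᶜ := by
  induction hB with
  | basic S hS =>
    refine ⟨projCl_basic hinf hS, ?_⟩
    obtain ⟨f, hf, hfe⟩ := compl_basicOpen_canon hinf hS
    rw [hfe]
    exact projCl_iUnion hinf r (le_of_eq (by simp [Cardinal.mul_eq_self hinf]))
      f (fun k => projCl_basic hinf (hf k))
  | compl S _ ih => exact ⟨ih.2, by rw [compl_compl]; exact ih.1⟩
  | iUnion ι f hι _ ih =>
    refine ⟨projCl_iUnion hinf r hι f (fun i => (ih i).1), ?_⟩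
    rw [compl_iUnion]
    exact projCl_iInter hinf s hι _ (fun i => (ih i).2)
  | iInter ι f hι _ ih =>
    refine ⟨projCl_iInter hinf s hι f (fun i => (ih i).1), ?_⟩
    rw [compl_iInter]
    exact projCl_iUnion hinf r hι _ (fun i => (ih i).2)

/-- The pairing homeomorphism induced by a bijection `K ⊕ K ≃ K`. -/
def pairE (r : (K ⊕ K) ≃ K) : ((K → K) × (K → K)) ≃ (K → K) where
  toFun p := fun m => Sum.elim p.1 p.2 (r.symm m)
  invFun ζ := (fun i => ζ (r (Sum.inl i)), fun i => ζ (r (Sum.inr i)))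
  left_inv p := by
    ext i <;> simp
  right_inv ζ := by
    funext m
    rcases h : r.symm m with i | i <;>
    · have := r.apply_symm_apply m
      rw [h] at this
      simp [← this]

lemma muBorel_image_pairE (hinf : ℵ₀ ≤ #K) (r : (K ⊕ K) ≃ K)
    {W : Set ((K → K) × (K → K))} (hW : MuBorel2 #K W) :
    MuBorel #K ((pairE r) '' W) := by
  have hinl : Function.Injective (fun i => r (Sum.inl i) : K → K) :=
    fun a b h => Sum.inl_injective (r.injective h)
  have hinr : Function.Injective (fun i => r (Sum.inr i) : K → K) :=
    fun a b h => Sum.inr_injective (r.injective h)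
  induction hW with
  | basic S hS =>
    obtain ⟨S₁, S₂, h1, h2, rfl⟩ := hS
    have heq : (pairE r) '' (S₁ ×ˢ S₂) =
        ((fun ζ : K → K => ζ ∘ (fun i => r (Sum.inl i))) ⁻¹' S₁) ∩
        ((fun ζ : K → K => ζ ∘ (fun i => r (Sum.inr i))) ⁻¹' S₂) := by
      rw [Equiv.image_eq_preimage_symm]
      ext ζ
      rfl
    rw [heq]
    exact MuBorel.basic _ (isBasicOpen_inter hinf
      (isBasicOpen_preimage_comp hinf hinl h1) (isBasicOpen_preimage_comp hinf hinr h2))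
  | compl S _ ih =>
    have heq : (pairE r) '' Sᶜ = ((pairE r) '' S)ᶜ := by
      rw [Equiv.image_eq_preimage_symm, Equiv.image_eq_preimage_symm, preimage_compl]
    rw [heq]
    exact MuBorel.compl _ ih
  | iUnion ι f hι _ ih =>
    rw [image_iUnion]
    exact MuBorel.iUnion ι _ hι ih
  | iInter ι f hι _ ih =>
    rw [Set.image_iInter (pairE r).bijective f]
    exact MuBorel.iInter ι _ hι ih

/-- Re-pairing: transfer a closed projection representation through the pairing. -/
lemma repair (hinf : ℵ₀ ≤ #K) (r : (K ⊕ K) ≃ K) {C₂ : Set ((K → K) × (K → K))}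
    (hcl : IsKClosed2 C₂) {W : Set ((K → K) × (K → K))}
    (hW : (pairE r) '' W = Prod.fst '' C₂) :
    ∃ C : Set ((K → K) × (K → K)), IsKClosed2 C ∧ Prod.fst '' W = Prod.fst '' C := by
  haveI : Nonempty K := Cardinal.mk_ne_zero_iff.mp (aleph0_pos.trans_le hinf).ne'
  set v₁ : K → K := fun i => r (Sum.inl i) with hv₁
  set v₂ : K → K := fun i => r (Sum.inr i) with hv₂
  have hv₁inj : Function.Injective v₁ := fun a b h => Sum.inl_injective (r.injective h)
  have hv₂inj : Function.Injective v₂ := fun a b h => Sum.inr_injective (r.injective h)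
  set Φ : (K → K) × (K → K) → (K → K) × (K → K) :=
    fun p => ((pairE r) (p.1, p.2 ∘ v₁), p.2 ∘ v₂) with hΦ
  have key : ∀ S : Set ((K → K) × (K → K)), IsBasicOpen2 S → IsBasicOpen2 (Φ ⁻¹' S) := by
    rintro S ⟨S₁, S₂, h1, h2, rfl⟩
    have hsplit : Φ ⁻¹' (S₁ ×ˢ S₂) =
        ({p : (K → K) × (K → K) | (pairE r) (p.1, p.2 ∘ v₁) ∈ S₁}) ∩
        (Set.univ ×ˢ ((fun η : K → K => η ∘ v₂) ⁻¹' S₂)) := by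
      ext p
      simp [Φ, Set.mem_prod]
    rw [hsplit]
    refine isBasicOpen2_inter hinf ?_ ⟨univ, _, isBasicOpen_univ hinf,
      isBasicOpen_preimage_comp hinf hv₂inj h2, rfl⟩
    rcases h1 with ⟨Y, f, hY, rfl⟩ | rfl
    · have heq : {p : (K → K) × (K → K) | (pairE r) (p.1, p.2 ∘ v₁) ∈ nbhd Y f} =
          (nbhd (v₁ ⁻¹' Y) (fun i => f (v₁ i))) ×ˢ
          ((fun η : K → K => η ∘ v₁) ⁻¹' nbhd (v₂ ⁻¹' Y) (fun i => f (v₂ i))) := by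
        ext p
        simp only [mem_setOf_eq, Set.mem_prod, mem_preimage, nbhd, mem_preimage]
        constructor
        · intro h
          constructor
          · intro i hi
            have := h (v₁ i) hi
            simpa [pairE, hv₁] using this
          · intro i hi
            have := h (v₂ i) hi
            simpa [pairE, hv₂] using this
        · rintro ⟨ha, hb⟩ m hm
          show Sum.elim p.1 (p.2 ∘ v₁) (r.symm m) = f m
          rcases h : r.symm m with i | i
          · have hmi : m = v₁ i := by rw [hv₁]; simp [← h]
            rw [hmi] at hm ⊢
            simpa using ha i hm
          · have hmi : m = v₂ i := by rw [hv₂]; simp [← h]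
            rw [hmi] at hm ⊢
            simpa using hb i hm
      rw [heq]
      refine ⟨_, _, Or.inl ⟨v₁ ⁻¹' Y, fun i => f (v₁ i),
        lt_of_le_of_lt (Cardinal.mk_preimage_of_injective v₁ Y hv₁inj) hY, rfl⟩,
        isBasicOpen_preimage_comp hinf hv₁inj (Or.inl ⟨v₂ ⁻¹' Y, fun i => f (v₂ i),
          lt_of_le_of_lt (Cardinal.mk_preimage_of_injective v₂ Y hv₂inj) hY, rfl⟩), rfl⟩
    · have : {p : (K → K) × (K → K) | (pairE r) (p.1, p.2 ∘ v₁) ∈ (∅ : Set (K → K))} = ∅ := by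
        ext p; simp
      rw [this]
      exact ⟨∅, ∅, isBasicOpen_empty, isBasicOpen_empty, by simp⟩
  refine ⟨Φ ⁻¹' C₂, ?_, ?_⟩
  · obtain ⟨g, hg, hge⟩ := isMuOpen2_canon hcl
    refine ⟨K, fun k => Φ ⁻¹' g k, le_refl _, fun k => key _ (hg k), ?_⟩
    have : (Φ ⁻¹' C₂)ᶜ = Φ ⁻¹' C₂ᶜ := rfl
    rw [this, hge, preimage_iUnion]
  · ext ξ
    simp only [Set.mem_image, mem_preimage]
    constructor
    · rintro ⟨⟨ξ', η⟩, hmem, rfl⟩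
      have h1 : (pairE r) (ξ', η) ∈ Prod.fst '' C₂ := by
        rw [← hW]; exact ⟨(ξ', η), hmem, rfl⟩
      obtain ⟨θ, hθ⟩ := h1
      obtain ⟨c, hc, hceq⟩ : ∃ c ∈ C₂, c = ((pairE r) (ξ', η), θ.2) := by
        obtain ⟨hc1, hc2⟩ := hθ
        exact ⟨θ, hc1, by rw [← hc2]⟩
      refine ⟨(ξ', (pairE r) (η, θ.2)), ?_, rfl⟩
      show Φ _ ∈ C₂
      have e1 : ((pairE r) (η, θ.2)) ∘ v₁ = η := by
        funext i; simp [pairE, hv₁]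
      have e2 : ((pairE r) (η, θ.2)) ∘ v₂ = θ.2 := by
        funext i; simp [pairE, hv₂]
      rw [hΦ]
      simp only [e1, e2]
      rw [← hceq]
      exact hc
    · rintro ⟨⟨ξ', η⟩, hmem, rfl⟩
      have h1 : (pairE r) (ξ', η ∘ v₁) ∈ Prod.fst '' C₂ := ⟨Φ (ξ', η), hmem, rfl⟩
      rw [← hW] at h1
      obtain ⟨w, hw, hweq⟩ := h1
      have : w = (ξ', η ∘ v₁) := (pairE r).injective hweq
      rw [this] at hw
      exact ⟨(ξ', η ∘ v₁), hw, rfl⟩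

end MainAux

end GDST

namespace GDST

/-- Let λ ≤ κ be infinite cardinals. Every (κ,λ)-Borel* subset of κ^κ is
the projection of a κ-closed subset of κ^κ × κ^κ. -/
theorem statement11 (K : Type u) [LinearOrder K]
    (lam : Cardinal.{u}) (hlam : ℵ₀ ≤ lam) (hinf : ℵ₀ ≤ #K) (hle : lam ≤ #K)
    (X : Set (K → K)) (hX : IsBorelStar lam X) :
    ∃ C : Set ((K → K) × (K → K)), IsKClosed2 C ∧ X = Prod.fst '' C := by
  obtain ⟨G, hGood, hCode, hIff⟩ := hX
  obtain ⟨D, π, hD, hLegal, hEx, hBor⟩ := hCode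
  set W := {p : (K → K) × (K → K) | p.2 ∈ D ∧ G.Wins (π p.2) p.1} with hWdef
  have hXW : X = Prod.fst '' W := by
    ext ξ
    constructor
    · intro hξ
      obtain ⟨η, hη, hw⟩ := hEx ξ ((hIff ξ).mp hξ)
      exact ⟨(ξ, η), ⟨hη, hw⟩, rfl⟩
    · rintro ⟨⟨ξ', η⟩, ⟨hη, hw⟩, rfl⟩
      exact (hIff ξ').mpr ⟨π η, hLegal η hη, hw⟩
  obtain ⟨r⟩ : Nonempty ((K ⊕ K) ≃ K) :=
    Cardinal.eq.mp (by simp [Cardinal.add_eq_self hinf])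
  obtain ⟨s⟩ : Nonempty (K ≃ K × K) :=
    Cardinal.eq.mp (by simp [Cardinal.mul_eq_self hinf])
  have hB : MuBorel #K ((pairE r) '' W) := muBorel_image_pairE hinf r hBor
  obtain ⟨C₂, hC₂, hEq⟩ := (muBorel_projCl hinf r s hB).1
  obtain ⟨C, hC, hCW⟩ := repair hinf r hC₂ hEq
  exact ⟨C, hC, hXW.trans hCW⟩

end GDST
end
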